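/- Lower tail bound for the largest eigenvalue, case 0 < α ≤ 1: fix an integer d ≥ 3 and α ∈ (0,1]. Then for every δ ∈ (0,1) and every ε > 0, for all sufficiently large n (with n > d, nd even): P( λ₁(X) ≤ (1−δ)·(log n)^{1/α} ) ≤ exp(−n^{1−(1−δ)^α−ε}). -/

import Mathlib

open MeasureTheory ProbabilityTheory Filter Real
open scoped ENNReal NNReal

noncomputable section

instance matrixMeasurableSpace {m n α : Type*} [MeasurableSpace α] :
    MeasurableSpace (Matrix m n α) :=
  inferInstanceAs (MeasurableSpace (m → n → α))

/-- The largest eigenvalue of a real square matrix: the supremum of its real eigenvalues. -/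
def lam1 {n : ℕ} (M : Matrix (Fin n) (Fin n) ℝ) : ℝ :=
  sSup {r : ℝ | ∃ v : Fin n → ℝ, v ≠ 0 ∧ M.mulVec v = r • v}

/-- The set of adjacency matrices of simple `d`-regular graphs on `n` vertices:
symmetric 0-1 matrices with zero diagonal and all row sums equal to `d`. -/
def RegAdj (n d : ℕ) : Set (Matrix (Fin n) (Fin n) ℝ) :=
  {M | M.IsSymm ∧ (∀ i, M i i = 0) ∧ (∀ i j, M i j = 0 ∨ M i j = 1) ∧
    ∀ i, (∑ j, M i j) = (d : ℝ)}

/-- A Weibull distribution with shape parameter `α` and constants `C₁ C₂`. -/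
def IsWeibull (α C₁ C₂ : ℝ) (μ : Measure ℝ) : Prop :=
  IsProbabilityMeasure μ ∧
  ∀ t : ℝ, 1 ≤ t →
    ENNReal.ofReal (C₁ * Real.exp (-t ^ α) / 2) ≤ μ {x | t ≤ x} ∧
    μ {x | t ≤ x} ≤ ENNReal.ofReal (C₂ * Real.exp (-t ^ α) / 2) ∧
    ENNReal.ofReal (C₁ * Real.exp (-t ^ α) / 2) ≤ μ {x | x ≤ -t} ∧
    μ {x | x ≤ -t} ≤ ENNReal.ofReal (C₂ * Real.exp (-t ^ α) / 2)

/-- The weighted random `d`-regular graph model: `A` is uniformly distributed on the set of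
adjacency matrices of simple `d`-regular graphs on `n` vertices, `W` is a symmetric random
matrix with zero diagonal whose upper-triangular entries are i.i.d. with common law `μ`
(a Weibull law with shape parameter `α` and constants `C₁ C₂`), and `W` is independent
of `A`. -/
def WRRGModel (d : ℕ) (α C₁ C₂ : ℝ) {n : ℕ} {Ω : Type*} [MeasurableSpace Ω]
    (P : Measure Ω) (A W : Ω → Matrix (Fin n) (Fin n) ℝ) (μ : Measure ℝ) : Prop :=
  IsProbabilityMeasure P ∧ Measurable A ∧ Measurable W ∧
  (∀ ω, A ω ∈ RegAdj n d) ∧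
  (∀ M ∈ RegAdj n d, P {ω | A ω = M} = ((RegAdj n d).ncard : ℝ≥0∞)⁻¹) ∧
  (∀ ω, (W ω).IsSymm) ∧ (∀ ω i, W ω i i = 0) ∧
  IsWeibull α C₁ C₂ μ ∧
  (∀ i j : Fin n, i < j → Measure.map (fun ω => W ω i j) P = μ) ∧
  iIndepFun
    (fun (p : {p : Fin n × Fin n // p.1 < p.2}) (ω : Ω) => W ω p.1.1 p.1.2) P ∧
  IndepFun A W P

/-!
The largest eigenvalue dominates every edge weight, since the Rayleigh quotient of `A ⊙ W` at
`eᵢ + eⱼ` is `Wᵢⱼ`. So on the event `λ₁ ≤ t`, `t = (1 - δ) (log n)^(1/α)`, all `nd/2 ≥ n` edge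
weights of the graph are at most `t`. Given the graph they are independent, and each exceeds `t`
with probability at least `c = C₁ exp (-(t + 1)^α) / 2 ≥ C₁ n^(-(1 - δ)^α) / (2e)`, because
`(t + 1)^α ≤ t^α + 1` for `α ≤ 1`. Hence the probability is at most
`(1 - c)^n ≤ exp (-c n) ≤ exp (-n^(1 - (1 - δ)^α - ε))` once `n^ε ≥ 2e / C₁`.
-/

open scoped Matrix

namespace Matrix

section Spectral

variable {n : ℕ} {M : Matrix (Fin n) (Fin n) ℝ}

lemma bddAbove_real_eigenvalues (M : Matrix (Fin n) (Fin n) ℝ) :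
    BddAbove {r : ℝ | ∃ v : Fin n → ℝ, v ≠ 0 ∧ M *ᵥ v = r • v} := by
  refine (M.finite_spectrum.subset ?_).bddAbove
  rintro r ⟨v, hv, hMv⟩
  rw [← spectrum_toLin', ← Module.End.hasEigenvalue_iff_mem_spectrum]
  exact Module.End.hasEigenvalue_of_hasEigenvector
    ⟨Module.End.mem_eigenspace_iff.2 (by simpa using hMv), hv⟩

lemma IsSymm.dotProduct_mulVec_le_lam1_mul (hM : M.IsSymm) (v : Fin n → ℝ) :
    v ⬝ᵥ M *ᵥ v ≤ lam1 M * (v ⬝ᵥ v) := by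
  rcases eq_or_ne v 0 with rfl | hv
  · simp
  set T := LinearMap.toContinuousLinearMap (toEuclideanLin M)
  set x : EuclideanSpace ℝ (Fin n) := WithLp.toLp 2 v
  have hx : x ≠ 0 := by simpa [x] using hv
  have : Nontrivial (EuclideanSpace ℝ (Fin n)) := ⟨⟨x, 0, hx⟩⟩
  have hT : (toEuclideanLin M).IsSymmetric :=
    isSymmetric_toEuclideanLin_iff.mpr (isHermitian_iff_isSymm.mpr hM)
  obtain ⟨u, hu⟩ := hT.hasEigenvalue_iSup_of_finiteDimensional.exists_hasEigenvector
  have hsup : ⨆ y : {y // y ≠ 0}, T.rayleighQuotient y.1 ≤ lam1 M :=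
    le_csSup (bddAbove_real_eigenvalues M)
      ⟨u.ofLp, by simpa using hu.2, congrArg WithLp.ofLp hu.apply_eq_smul⟩
  have hbdd : BddAbove (Set.range fun y : {y // y ≠ 0} => T.rayleighQuotient y.1) := by
    refine ⟨‖T‖, ?_⟩
    rintro _ ⟨y, rfl⟩
    exact (le_abs_self _).trans (T.rayleighQuotient_le_norm y)
  have hxx : ‖x‖ ^ 2 = v ⬝ᵥ v := by
    rw [← real_inner_self_eq_norm_sq]; rfl
  have hTx : inner ℝ (T x) x = v ⬝ᵥ M *ᵥ v := by
    rw [EuclideanSpace.inner_eq_star_dotProduct]; rfl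
  have hRx : T.rayleighQuotient x = (v ⬝ᵥ M *ᵥ v) / (v ⬝ᵥ v) := by
    rw [ContinuousLinearMap.rayleighQuotient, ContinuousLinearMap.reApplyInnerSelf_apply, hTx, hxx,
      RCLike.re_to_real]
  rw [← div_le_iff₀ (hxx ▸ by positivity), ← hRx]
  exact (le_ciSup hbdd ⟨x, hx⟩).trans hsup

lemma IsSymm.apply_le_lam1 (hM : M.IsSymm) (hdiag : ∀ i, M i i = 0) {i j : Fin n}
    (hij : i ≠ j) : M i j ≤ lam1 M := by
  have h := hM.dotProduct_mulVec_le_lam1_mul (Pi.single i 1 + Pi.single j 1)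
  simp [mulVec_add, dotProduct_add, add_dotProduct, hij, hij.symm, hdiag, hM.apply i j] at h
  linarith

end Spectral

lemma IsSymm.sum_eq_two_nsmul_sum_upper {ι α : Type*} [Fintype ι] [LinearOrder ι]
    [AddCommMonoid α] {M : Matrix ι ι α} (hM : M.IsSymm) (hdiag : ∀ i, M i i = 0) :
    ∑ i, ∑ j, M i j = 2 • ∑ q : {p : ι × ι // p.1 < p.2}, M q.1.1 q.1.2 := by
  have hupper : ∑ q : {p : ι × ι // p.1 < p.2}, M q.1.1 q.1.2
      = ∑ i, ∑ j, if i < j then M i j else 0 := by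
    rw [← Finset.sum_subtype (Finset.univ.filter fun p : ι × ι => p.1 < p.2) (by simp)
      (fun p => M p.1 p.2), Finset.sum_filter, Fintype.sum_prod_type]
  have hlower : ∑ i, ∑ j, (if j < i then M i j else 0)
      = ∑ i, ∑ j, if i < j then M i j else 0 := by
    rw [Finset.sum_comm]
    simp only [hM.apply]
  have hsplit (i j : ι) :
      M i j = (if i < j then M i j else 0) + (if j < i then M i j else 0) := by
    rcases lt_trichotomy i j with h | rfl | h
    · simp [h, h.not_gt]
    · simp [hdiag]
    · simp [h, h.not_gt]
  calc ∑ i, ∑ j, M i j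
      = ∑ i, ∑ j, ((if i < j then M i j else 0) + (if j < i then M i j else 0)) :=
        Fintype.sum_congr _ _ fun i => Fintype.sum_congr _ _ fun j => hsplit i j
    _ = _ := by simp only [Finset.sum_add_distrib, hlower, hupper, two_nsmul]

instance {m n α : Type*} [Countable m] [Countable n] [MeasurableSpace α]
    [MeasurableSingletonClass α] : MeasurableSingletonClass (Matrix m n α) :=
  inferInstanceAs (MeasurableSingletonClass (m → n → α))

lemma measurable_apply {m n α : Type*} [MeasurableSpace α] (i : m) (j : n) :
    Measurable fun N : Matrix m n α => N i j :=
  (measurable_pi_apply j).comp (measurable_pi_apply i)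

end Matrix

def upperEdges {n : ℕ} (M : Matrix (Fin n) (Fin n) ℝ) :
    Finset {p : Fin n × Fin n // p.1 < p.2} :=
  Finset.univ.filter fun q => M q.1.1 q.1.2 = 1

lemma two_mul_card_upperEdges {n d : ℕ} {M : Matrix (Fin n) (Fin n) ℝ} (hM : M ∈ RegAdj n d) :
    2 * (upperEdges M).card = n * d := by
  obtain ⟨hsymm, hdiag, hbin, hrow⟩ := hM
  have hcard : ((upperEdges M).card : ℝ)
      = ∑ q : {p : Fin n × Fin n // p.1 < p.2}, M q.1.1 q.1.2 := by
    rw [upperEdges, Finset.natCast_card_filter]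
    refine Finset.sum_congr rfl fun q _ => ?_
    rcases hbin q.1.1 q.1.2 with h | h <;> simp [h]
  have h := hsymm.sum_eq_two_nsmul_sum_upper hdiag
  simp only [hrow, Finset.sum_const, Finset.card_univ, Fintype.card_fin, nsmul_eq_mul,
    ← hcard] at h
  exact_mod_cast h.symm

lemma finite_regAdj (n d : ℕ) : (RegAdj n d).Finite := by
  refine (Set.finite_range fun B : Fin n → Fin n → Bool =>
    Matrix.of fun i j => if B i j then (1 : ℝ) else 0).subset fun M hM => ?_
  refine ⟨fun i j => M i j = 1, ?_⟩
  ext i j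
  rcases hM.2.2.1 i j with h | h <;> simp [h]

lemma apply_le_lam1_hadamard {n d : ℕ} {M N : Matrix (Fin n) (Fin n) ℝ} (hM : M ∈ RegAdj n d)
    (hN : N.IsSymm) (hNdiag : ∀ i, N i i = 0) {q : {p : Fin n × Fin n // p.1 < p.2}}
    (hq : q ∈ upperEdges M) : N q.1.1 q.1.2 ≤ lam1 (M ⊙ N) := by
  have hMN : (M ⊙ N).IsSymm := by
    ext i j
    simp [hM.1.apply, hN.apply]
  have hq1 : M q.1.1 q.1.2 = 1 := (Finset.mem_filter.1 hq).2
  simpa [hq1] using hMN.apply_le_lam1 (fun i => by simp [hNdiag]) q.2.ne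

lemma ProbabilityTheory.iIndepFun.measure_iInter_preimage_le_pow {Ω ι β : Type*}
    [MeasurableSpace Ω] [MeasurableSpace β] {P : Measure Ω} {X : ι → Ω → β}
    (hX : iIndepFun X P) {s : Set β} (hs : MeasurableSet s) {p : ℝ≥0∞} (S : Finset ι)
    (hp : ∀ i ∈ S, P (X i ⁻¹' s) ≤ p) :
    P (⋂ i ∈ S, X i ⁻¹' s) ≤ p ^ S.card := by
  rw [hX.measure_inter_preimage_eq_mul S (sets := fun _ => s) fun _ _ => hs]
  exact Finset.prod_le_pow_card S _ p hp

lemma ProbabilityTheory.IndepFun.measure_biUnion_preimage_singleton_inter_le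
    {Ω α β : Type*} [MeasurableSpace Ω] [MeasurableSpace α] [MeasurableSingletonClass α]
    [MeasurableSpace β] {P : Measure Ω} [IsProbabilityMeasure P] {A : Ω → α} {W : Ω → β}
    (hAW : IndepFun A W P) (hA : Measurable A) (F : Finset α) {U : α → Set β}
    (hU : ∀ a ∈ F, MeasurableSet (U a)) {b : ℝ≥0∞} (hb : ∀ a ∈ F, P (W ⁻¹' U a) ≤ b) :
    P (⋃ a ∈ F, A ⁻¹' {a} ∩ W ⁻¹' U a) ≤ b :=
  calc P (⋃ a ∈ F, A ⁻¹' {a} ∩ W ⁻¹' U a)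
      ≤ ∑ a ∈ F, P (A ⁻¹' {a} ∩ W ⁻¹' U a) := measure_biUnion_finset_le F _
    _ = ∑ a ∈ F, P (A ⁻¹' {a}) * P (W ⁻¹' U a) := Finset.sum_congr rfl fun a ha =>
        hAW.measure_inter_preimage_eq_mul _ _ (measurableSet_singleton a) (hU a ha)
    _ ≤ ∑ a ∈ F, P (A ⁻¹' {a}) * b := by gcongr with a ha; exact hb a ha
    _ = P (A ⁻¹' F) * b := by
        rw [← Finset.sum_mul, sum_measure_preimage_singleton F fun a _ =>
          hA (measurableSet_singleton a)]
    _ ≤ b := mul_le_of_le_one_left' prob_le_one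

/-- The tail bound of `IsWeibull` is only assumed at arguments `≥ 1`, hence the shift to `t + 1`. -/
lemma IsWeibull.measure_Iic_le {α C₁ C₂ : ℝ} {μ : Measure ℝ} (h : IsWeibull α C₁ C₂ μ) {t : ℝ}
    (ht : 0 ≤ t) : μ (Set.Iic t) ≤ 1 - ENNReal.ofReal (C₁ * exp (-(t + 1) ^ α) / 2) := by
  have := h.1
  calc μ (Set.Iic t) ≤ μ (Set.Ici (t + 1))ᶜ :=
        measure_mono fun x (hx : x ≤ t) (hx' : t + 1 ≤ x) => by linarith
    _ = 1 - μ (Set.Ici (t + 1)) := prob_compl_eq_one_sub measurableSet_Ici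
    _ ≤ _ := tsub_le_tsub_left (h.2 (t + 1) (by linarith)).1 1

lemma ENNReal.one_sub_ofReal_pow_le_ofReal_exp (q : ℝ) (n : ℕ) :
    (1 - ENNReal.ofReal q) ^ n ≤ ENNReal.ofReal (exp (-(q * n))) := by
  rcases le_total q 0 with hq | hq
  · rw [ENNReal.ofReal_of_nonpos hq, tsub_zero, one_pow, ← ENNReal.ofReal_one]
    exact ENNReal.ofReal_le_ofReal (one_le_exp (by nlinarith [n.cast_nonneg (α := ℝ)]))
  rw [← ENNReal.ofReal_one, ← ENNReal.ofReal_sub _ hq]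
  calc ENNReal.ofReal (1 - q) ^ n ≤ ENNReal.ofReal (exp (-q)) ^ n := by
        gcongr; linarith [add_one_le_exp (-q)]
    _ = ENNReal.ofReal (exp (-(q * n))) := by
        rw [← ENNReal.ofReal_pow (exp_pos _).le, ← exp_nat_mul]; ring_nf

namespace WRRGModel

variable {d : ℕ} {α C₁ C₂ : ℝ} {n : ℕ} {Ω : Type*} [MeasurableSpace Ω] {P : Measure Ω}
  {A W : Ω → Matrix (Fin n) (Fin n) ℝ} {μ : Measure ℝ}

theorem measure_lam1_hadamard_le (h : WRRGModel d α C₁ C₂ P A W μ) (hd : 2 ≤ d) {t : ℝ}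
    (ht : 0 ≤ t) :
    P {ω | lam1 (A ω ⊙ W ω) ≤ t} ≤
      ENNReal.ofReal (exp (-(C₁ * exp (-(t + 1) ^ α) / 2 * n))) := by
  obtain ⟨hP, hAmeas, hWmeas, hAreg, -, hWsymm, hWdiag, hweib, hlaw, hindep, hAW⟩ := h
  set c := C₁ * exp (-(t + 1) ^ α) / 2
  set U : Matrix (Fin n) (Fin n) ℝ → Set (Matrix (Fin n) (Fin n) ℝ) :=
    fun M => ⋂ q ∈ upperEdges M, (fun N => N q.1.1 q.1.2) ⁻¹' Set.Iic t
  have hsub : {ω | lam1 (A ω ⊙ W ω) ≤ t} ⊆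
      ⋃ M ∈ (finite_regAdj n d).toFinset, A ⁻¹' {M} ∩ W ⁻¹' U M := by
    intro ω hω
    simp only [Set.mem_iUnion, Set.mem_inter_iff, Set.mem_preimage, Set.mem_iInter, U]
    exact ⟨A ω, by simpa using hAreg ω, rfl, fun q hq =>
      (apply_le_lam1_hadamard (hAreg ω) (hWsymm ω) (hWdiag ω) hq).trans hω⟩
  refine (measure_mono hsub).trans (hAW.measure_biUnion_preimage_singleton_inter_le hAmeas _
    (fun M _ => .biInter (Finset.countable_toSet _) fun q _ =>
      Matrix.measurable_apply q.1.1 q.1.2 measurableSet_Iic) fun M hM => ?_)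
  have hcard : n ≤ (upperEdges M).card := by
    have := two_mul_card_upperEdges ((finite_regAdj n d).mem_toFinset.1 hM)
    nlinarith
  have hentry : ∀ q ∈ upperEdges M,
      P ((fun ω => W ω q.1.1 q.1.2) ⁻¹' Set.Iic t) ≤ 1 - ENNReal.ofReal c := by
    intro q _
    have hWq : Measurable fun ω => W ω q.1.1 q.1.2 :=
      (Matrix.measurable_apply q.1.1 q.1.2).comp hWmeas
    rw [← Measure.map_apply hWq measurableSet_Iic, hlaw _ _ q.2]
    exact hweib.measure_Iic_le ht
  calc P (W ⁻¹' U M) = P (⋂ q ∈ upperEdges M, (fun ω => W ω q.1.1 q.1.2) ⁻¹' Set.Iic t) := by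
        simp only [U, Set.preimage_iInter₂]; rfl
    _ ≤ (1 - ENNReal.ofReal c) ^ (upperEdges M).card :=
        hindep.measure_iInter_preimage_le_pow measurableSet_Iic _ hentry
    _ ≤ (1 - ENNReal.ofReal c) ^ n := pow_le_pow_right_of_le_one' tsub_le_self hcard
    _ ≤ _ := ENNReal.one_sub_ofReal_pow_le_ofReal_exp c n

end WRRGModel

lemma rpow_le_mul_exp_neg_rpow_mul {C α s x ε : ℝ} (hC : 0 < C) (hα : 0 < α) (hα1 : α ≤ 1)
    (hs : 0 ≤ s) (hx : 1 ≤ x) (hxε : 2 * exp 1 / C ≤ x ^ ε) :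
    x ^ (1 - s ^ α - ε) ≤ C * exp (-(s * log x ^ (1 / α) + 1) ^ α) / 2 * x := by
  have hx0 : 0 < x := by linarith
  have hlog : 0 ≤ log x := log_nonneg hx
  set t := s * log x ^ (1 / α)
  have ht : 0 ≤ t := by positivity
  have htα : t ^ α = s ^ α * log x := by
    rw [mul_rpow hs (rpow_nonneg hlog _), ← rpow_mul hlog, one_div_mul_cancel hα.ne', rpow_one]
  have hexp : x ^ (-s ^ α) / exp 1 ≤ exp (-(t + 1) ^ α) :=
    calc x ^ (-s ^ α) / exp 1 = exp (-t ^ α - 1) := by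
          rw [htα, exp_sub, rpow_def_of_pos hx0]; ring_nf
      _ ≤ exp (-(t + 1) ^ α) := by
          gcongr
          linarith [rpow_add_le_add_rpow ht zero_le_one hα.le hα1, one_rpow α]
  have hsplit : x ^ (1 - s ^ α - ε) * x ^ ε = x ^ (-s ^ α) * x := by
    rw [← rpow_add hx0, ← rpow_add_one hx0.ne']; ring_nf
  calc x ^ (1 - s ^ α - ε) ≤ x ^ (1 - s ^ α - ε) * (C * x ^ ε / (2 * exp 1)) := by
        refine le_mul_of_one_le_right (by positivity) ?_
        rw [one_le_div (by positivity)]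
        rwa [div_le_iff₀' hC] at hxε
    _ = C * (x ^ (-s ^ α) / exp 1) / 2 * x := by
        linear_combination C / (2 * exp 1) * hsplit
    _ ≤ C * exp (-(t + 1) ^ α) / 2 * x := by gcongr

theorem largest_eigenvalue_lower_tail_heavy_general
    (d : ℕ) (hd : 3 ≤ d) (α : ℝ) (hα : 0 < α) (hα1 : α ≤ 1)
    (C₁ C₂ : ℝ) (hC₁ : 0 < C₁)
    (Ω : ℕ → Type*) [∀ n, MeasurableSpace (Ω n)]
    (P : ∀ n, Measure (Ω n))
    (A W : ∀ n, Ω n → Matrix (Fin n) (Fin n) ℝ)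
    (μ : ℕ → Measure ℝ)
    (hmodel : ∀ n, d < n → Even (n * d) →
      WRRGModel d α C₁ C₂ (P n) (A n) (W n) (μ n)) :
    ∀ δ : ℝ, 0 < δ → δ < 1 → ∀ ε : ℝ, 0 < ε →
      ∀ᶠ n in atTop ⊓ 𝓟 {n : ℕ | d < n ∧ Even (n * d)},
        P n {ω | lam1 (Matrix.hadamard (A n ω) (W n ω)) ≤
            (1 - δ) * Real.log n ^ (1 / α)} ≤
          ENNReal.ofReal (Real.exp (-(n : ℝ) ^ (1 - (1 - δ) ^ α - ε))) := by
  intro δ _ hδ1 ε hε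
  rw [eventually_inf_principal]
  have hlarge : ∀ᶠ n : ℕ in atTop, 2 * exp 1 / C₁ ≤ (n : ℝ) ^ ε :=
    ((tendsto_rpow_atTop hε).comp tendsto_natCast_atTop_atTop).eventually_ge_atTop _
  filter_upwards [hlarge] with n hn ⟨hdn, hnd⟩
  have hs : 0 ≤ 1 - δ := by linarith
  have hn1 : (1 : ℝ) ≤ n := by exact_mod_cast (by omega : 1 ≤ n)
  calc _ ≤ _ := (hmodel n hdn hnd).measure_lam1_hadamard_le (by omega)
        (mul_nonneg hs (rpow_nonneg (log_nonneg hn1) _))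
    _ ≤ _ := ENNReal.ofReal_le_ofReal <| exp_le_exp.2 <| neg_le_neg <|
        rpow_le_mul_exp_neg_rpow_mul hC₁ hα hα1 hs hn1 hn

/-- **Lower tail bound for the largest eigenvalue, case `0 < α ≤ 1`.** -/
theorem largest_eigenvalue_lower_tail_heavy
    (d : ℕ) (hd : 3 ≤ d) (α : ℝ) (hα : 0 < α) (hα1 : α ≤ 1)
    (C₁ C₂ : ℝ) (hC₁ : 0 < C₁) (hC₂ : 0 < C₂)
    (Ω : ℕ → Type*) [∀ n, MeasurableSpace (Ω n)]
    (P : ∀ n, Measure (Ω n))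
    (A W : ∀ n, Ω n → Matrix (Fin n) (Fin n) ℝ)
    (μ : ℕ → Measure ℝ)
    (hmodel : ∀ n, d < n → Even (n * d) →
      WRRGModel d α C₁ C₂ (P n) (A n) (W n) (μ n)) :
    ∀ δ : ℝ, 0 < δ → δ < 1 → ∀ ε : ℝ, 0 < ε →
      ∀ᶠ n in atTop ⊓ 𝓟 {n : ℕ | d < n ∧ Even (n * d)},
        P n {ω | lam1 (Matrix.hadamard (A n ω) (W n ω)) ≤
            (1 - δ) * Real.log n ^ (1 / α)} ≤
          ENNReal.ofReal (Real.exp (-(n : ℝ) ^ (1 - (1 - δ) ^ α - ε))) :=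
  largest_eigenvalue_lower_tail_heavy_general d hd α hα hα1 C₁ C₂ hC₁ Ω P A W μ hmodel
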